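/- No Martin-Löf random real belongs to KT(Δ⁰₂) or to LK(Δ⁰₂) (in fact, no Martin-Löf random real is K-trivial or low for K even up to the order log n); consequently both KT(Δ⁰₂) and LK(Δ⁰₂) have Lebesgue measure zero. -/

import Mathlib

/-! Common framework: prefix-free Kolmogorov complexity via a universal
prefix-free oracle machine, Δ⁰₂ functions and orders, Turing and wtt
reducibility, Ω, and the uniform measure on Cantor space. -/

/-- Finite binary strings, `2^{<ω}`. -/
abbrev BinStr := List Bool

/-- Reals, i.e. infinite binary sequences `2^ω`. -/
abbrev Seq2 := ℕ → Bool

/-- The initial segment `A↾n` of a real `A ∈ 2^ω`. -/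
def restrict (A : Seq2) (n : ℕ) : BinStr := (List.range n).map A

/-- A prefix-free oracle machine, presented as a computable enumeration of
axioms `(τ, p, y)`, meaning: on any oracle extending `τ`, the machine halts on
program `p` with output `y`.  Consistency says that for compatible oracle
strings the halting programs form a prefix-free set and outputs are unique. -/
structure PrefixOracleMachine where
  axioms : ℕ → Option (BinStr × BinStr × BinStr)
  axioms_computable : Computable axioms
  consistent : ∀ s t τ₁ p₁ y₁ τ₂ p₂ y₂,
    axioms s = some (τ₁, p₁, y₁) → axioms t = some (τ₂, p₂, y₂) →
    (τ₁ <+: τ₂ ∨ τ₂ <+: τ₁) → p₁ <+: p₂ → p₁ = p₂ ∧ y₁ = y₂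

/-- `M.Computes A p y` : with oracle `A`, machine `M` halts on program `p` with
output `y`. -/
def PrefixOracleMachine.Computes (M : PrefixOracleMachine) (A : Seq2) (p y : BinStr) : Prop :=
  ∃ s τ, M.axioms s = some (τ, p, y) ∧ ∃ n, τ = restrict A n

/-- A universal prefix-free oracle machine: it describes every string (relative
to every oracle), and it simulates every prefix-free oracle machine up to an
additive constant in the length of programs. -/
structure UniversalPrefixMachine extends PrefixOracleMachine where
  total : ∀ (A : Seq2) (y : BinStr), ∃ p, toPrefixOracleMachine.Computes A p y
  universal : ∀ M : PrefixOracleMachine, ∃ c : ℕ, ∀ (A : Seq2) (p y : BinStr),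
    M.Computes A p y →
      ∃ q, toPrefixOracleMachine.Computes A q y ∧ q.length ≤ p.length + c

/-- `K^A(y)` : prefix-free Kolmogorov complexity of `y` relative to oracle `A`. -/
noncomputable def KOr (U : UniversalPrefixMachine) (A : Seq2) (y : BinStr) : ℕ :=
  sInf {n | ∃ p : BinStr, p.length = n ∧ U.toPrefixOracleMachine.Computes A p y}

/-- The all-zeros (recursive) oracle. -/
def zeroSeq : Seq2 := fun _ => false

/-- `K(y)` : (unrelativized) prefix-free Kolmogorov complexity. -/
noncomputable def Kc (U : UniversalPrefixMachine) (y : BinStr) : ℕ := KOr U zeroSeq y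

/-- `K(n)` : the complexity of the string of `n` zeros. -/
noncomputable def KcNat (U : UniversalPrefixMachine) (n : ℕ) : ℕ :=
  Kc U (List.replicate n false)

/-- `A ∈ KT(g)` : `A` is K-trivial up to `g`. -/
def KT (U : UniversalPrefixMachine) (g : ℕ → ℕ) (A : Seq2) : Prop :=
  ∃ c : ℕ, ∀ n : ℕ, Kc U (restrict A n) ≤ KcNat U n + g n + c

/-- `A ∈ LK(f)` : `A` is low for K up to `f`. -/
def LK (U : UniversalPrefixMachine) (f : BinStr → ℕ) (A : Seq2) : Prop :=
  ∃ c : ℕ, ∀ σ : BinStr, Kc U σ ≤ KOr U A σ + f σ + c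

/-- The position of a string in the length-lexicographic ordering of `2^{<ω}`. -/
def strNum (σ : BinStr) : ℕ := σ.foldl (fun n b => 2 * n + (if b then 2 else 1)) 0

/-- A function `ℕ → ℕ` is Δ⁰₂ iff it has a recursive approximation. -/
def Delta02Fun (g : ℕ → ℕ) : Prop :=
  ∃ G : ℕ → ℕ → ℕ, Computable₂ G ∧ ∀ x, ∃ t, ∀ s ≥ t, G s x = g x

/-- A function `2^{<ω} → ℕ` is Δ⁰₂ iff it has a recursive approximation. -/
def Delta02StrFun (f : BinStr → ℕ) : Prop :=
  ∃ F : ℕ → BinStr → ℕ, Computable₂ F ∧ ∀ σ, ∃ t, ∀ s ≥ t, F s σ = f σ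

/-- A real is Δ⁰₂ iff it has a recursive approximation. -/
def Delta02Seq (A : Seq2) : Prop :=
  ∃ F : ℕ → ℕ → Bool, Computable₂ F ∧ ∀ x, ∃ t, ∀ s ≥ t, F s x = A x

/-- An order: an unbounded nondecreasing function `ℕ → ℕ`. -/
def IsOrder (g : ℕ → ℕ) : Prop := Monotone g ∧ ∀ b : ℕ, ∃ m, b < g m

/-- An order on strings: unbounded and nondecreasing with respect to the
length-lexicographic ordering of `2^{<ω}`. -/
def IsStrOrder (f : BinStr → ℕ) : Prop :=
  (∀ σ τ : BinStr, strNum σ ≤ strNum τ → f σ ≤ f τ) ∧ ∀ b : ℕ, ∃ σ, b < f σ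

/-- `A ∈ KT(Δ⁰₂)` : `A` is K-trivial up to every Δ⁰₂ order. -/
def KTDelta (U : UniversalPrefixMachine) (A : Seq2) : Prop :=
  ∀ g : ℕ → ℕ, Delta02Fun g → IsOrder g → KT U g A

/-- `A ∈ LK(Δ⁰₂)` : `A` is low for K up to every Δ⁰₂ order. -/
def LKDelta (U : UniversalPrefixMachine) (A : Seq2) : Prop :=
  ∀ f : BinStr → ℕ, Delta02StrFun f → IsStrOrder f → LK U f A

/-- A Δ⁰₂ function is finite-to-one approximable if it has a recursive
approximation `F` such that for every `n`, for all but finitely many `m`,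
`F s m > n` for all stages `s`. -/
def FinToOneApprox (f : ℕ → ℕ) : Prop :=
  ∃ F : ℕ → ℕ → ℕ, Computable₂ F ∧ (∀ x, ∃ t, ∀ s ≥ t, F s x = f x) ∧
    ∀ n : ℕ, {m : ℕ | ∃ s, F s m ≤ n}.Finite

/-- A Turing functional, presented as a computable enumeration of axioms
`(τ, n, b)`, meaning: on any oracle extending `τ`, the output bit `n` is `b`. -/
structure TuringFunctional where
  axioms : ℕ → Option (BinStr × ℕ × Bool)
  axioms_computable : Computable axioms
  consistent : ∀ s t τ₁ n₁ b₁ τ₂ n₂ b₂,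
    axioms s = some (τ₁, n₁, b₁) → axioms t = some (τ₂, n₂, b₂) →
    (τ₁ <+: τ₂ ∨ τ₂ <+: τ₁) → n₁ = n₂ → b₁ = b₂

/-- `Φ.Computes B A` : `Φ^B = A`. -/
def TuringFunctional.Computes (Φ : TuringFunctional) (B A : Seq2) : Prop :=
  ∀ n : ℕ, ∃ s k, Φ.axioms s = some (restrict B k, n, A n)

/-- Turing reducibility `A ≤_T B`. -/
def TuringLE (A B : Seq2) : Prop := ∃ Φ : TuringFunctional, Φ.Computes B A

/-- Weak truth-table reducibility `A ≤_wtt B` : a Turing reduction whose use is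
bounded by a recursive function. -/
def WttLE (A B : Seq2) : Prop :=
  ∃ (Φ : TuringFunctional) (u : ℕ → ℕ), Computable u ∧
    ∀ n : ℕ, ∃ s k, k ≤ u n ∧ Φ.axioms s = some (restrict B k, n, A n)

/-- The effective join `A ⊕ B`. -/
def join (A B : Seq2) : Seq2 := fun n => if n % 2 = 0 then A (n / 2) else B (n / 2)

/-- `A` is Martin-Löf random: `K(A↾n) ≥ n - c` for all `n`. -/
def MLRandom (U : UniversalPrefixMachine) (A : Seq2) : Prop :=
  ∃ c : ℕ, ∀ n : ℕ, n ≤ Kc U (restrict A n) + c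

/-- `A` is infinitely often K-trivial. -/
def InfOftenKTrivial (U : UniversalPrefixMachine) (A : Seq2) : Prop :=
  ∃ c : ℕ, {n : ℕ | Kc U (restrict A n) ≤ KcNat U n + c}.Infinite

/-- K-reducibility `B ≤_K A`. -/
def KLE (U : UniversalPrefixMachine) (B A : Seq2) : Prop :=
  ∃ c : ℕ, ∀ n : ℕ, Kc U (restrict B n) ≤ Kc U (restrict A n) + c

/-- LK-reducibility `A ≤_LK B`. -/
def LKLE (U : UniversalPrefixMachine) (A B : Seq2) : Prop :=
  ∃ c : ℕ, ∀ σ : BinStr, KOr U B σ ≤ KOr U A σ + c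

/-- `A` is weakly low for K: `K(σ) ≤ K^A(σ) + c` for infinitely many strings σ. -/
def WeaklyLowForK (U : UniversalPrefixMachine) (A : Seq2) : Prop :=
  ∃ c : ℕ, {σ : BinStr | Kc U σ ≤ KOr U A σ + c}.Infinite

/-- Chaitin's Ω : the measure of the domain of the universal machine. -/
noncomputable def Omega (U : UniversalPrefixMachine) : ℝ :=
  ∑' p : {p : BinStr // ∃ y, U.toPrefixOracleMachine.Computes zeroSeq p y},
    ((2 : ℝ) ^ (p : BinStr).length)⁻¹

/-- The `n`-th binary digit of a real number `x`. -/
noncomputable def realBit (x : ℝ) (n : ℕ) : Bool :=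
  decide (⌊x * 2 ^ (n + 1)⌋ % 2 = 1)

/-- `Ω↾n` : the length-`n` initial segment of the binary expansion of Ω. -/
noncomputable def omegaStr (U : UniversalPrefixMachine) (n : ℕ) : BinStr :=
  (List.range n).map (realBit (Omega U))

/-- `A` is low for Ω. -/
def LowForOmega (U : UniversalPrefixMachine) (A : Seq2) : Prop :=
  ∀ c : ℕ, ∃ n : ℕ, KOr U A (omegaStr U n) + c < n

/-- The uniform (coin-flipping) measure on `2^ω`, obtained as the image of
Lebesgue measure on `[0,1]` under the binary-expansion map. -/
noncomputable def cantorMeasure : MeasureTheory.Measure Seq2 :=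
  MeasureTheory.Measure.map (fun x : ℝ => fun n : ℕ => realBit x n)
    (MeasureTheory.volume.restrict (Set.Icc (0 : ℝ) 1))


/-!
A Martin-Löf random real has `K(A↾n) ≥ n - O(1)`. On the other hand `K(n) ≤ 2 log n + O(1)`
and `K^A(A↾n) ≤ 2 log n + O(1)`: describe `n` by a self-delimiting binary code, which with
oracle `A` also yields `A↾n`. Membership in `KT(log)` or `LK(log)` would therefore give
`n ≤ 3 log n + O(1)` for all `n`, which is false; and `log` is a computable order, so it
witnesses that a random real lies in neither `KT(Δ⁰₂)` nor `LK(Δ⁰₂)`. Finally the non-random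
reals form a null set: for each `c` they are covered by the cylinders of the strings `σ` with
`K(σ) + c < |σ|`, whose total measure is at most `2^{-c}` by Kraft's inequality for the
prefix-free domain of the universal machine.
-/

lemma restrict_length (A : Seq2) (n : ℕ) : (restrict A n).length = n := by
  simp [restrict]

lemma restrict_eq_ofFn (A : Seq2) (n : ℕ) : restrict A n = List.ofFn fun i : Fin n => A i := by
  apply List.ext_getElem <;> simp [restrict]

lemma restrict_succ (A : Seq2) (n : ℕ) : restrict A (n + 1) = restrict A n ++ [A n] := by
  simp [restrict, List.range_succ]

lemma restrict_prefix_restrict (A : Seq2) {m n : ℕ} (h : m ≤ n) :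
    restrict A m <+: restrict A n := by
  rw [restrict, restrict, ← min_eq_left h, ← List.take_range, List.map_take]
  exact List.take_prefix _ _

lemma restrict_zeroSeq (n : ℕ) : restrict zeroSeq n = List.replicate n false := by
  simp [restrict, List.map_const', show zeroSeq = fun _ => false from rfl]

def selfDelim (ρ : BinStr) : BinStr := List.replicate ρ.length true ++ false :: ρ

lemma selfDelim_length (ρ : BinStr) : (selfDelim ρ).length = 2 * ρ.length + 1 := by
  simp [selfDelim]; ring

lemma eq_of_selfDelim_prefix {ρ₁ ρ₂ : BinStr} (h : selfDelim ρ₁ <+: selfDelim ρ₂) : ρ₁ = ρ₂ := by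
  have hlen : ρ₁.length ≤ ρ₂.length := by
    have := h.length_le
    rw [selfDelim_length, selfDelim_length] at this
    omega
  obtain ⟨d, hd⟩ := Nat.exists_eq_add_of_le hlen
  rw [selfDelim, selfDelim, hd, List.replicate_add, List.append_assoc,
    List.prefix_append_right_inj] at h
  cases d with
  | zero => exact (List.cons_prefix_cons.1 h).2.eq_of_length (by omega)
  | succ d => simp [List.replicate_succ] at h

def binDigits (n : ℕ) : BinStr := (List.range (Nat.log 2 n + 1)).map n.testBit

lemma binDigits_injective : Function.Injective binDigits := by
  intro a b h
  have hlog : Nat.log 2 a = Nat.log 2 b := by simpa [binDigits] using congrArg List.length h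
  apply Nat.eq_of_testBit_eq
  intro i
  by_cases hi : i < Nat.log 2 b + 1
  · simpa [binDigits, hlog, hi] using congrArg (·[i]?) h
  · rw [Nat.testBit_lt_two_pow (Nat.lt_pow_of_log_lt one_lt_two (by omega)),
      Nat.testBit_lt_two_pow (Nat.lt_pow_of_log_lt one_lt_two (by omega))]

def enc (n : ℕ) : BinStr := selfDelim (binDigits n)

lemma enc_length (n : ℕ) : (enc n).length = 2 * Nat.log 2 n + 3 := by
  simp [enc, selfDelim_length, binDigits]; ring

lemma eq_of_enc_prefix {a b : ℕ} (h : enc a <+: enc b) : a = b :=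
  binDigits_injective (eq_of_selfDelim_prefix h)

lemma log_two_eq_findGreatest (n : ℕ) :
    Nat.log 2 n = Nat.findGreatest (fun k => 2 ^ k ≤ n) n := by
  symm
  rw [Nat.findGreatest_eq_iff]
  refine ⟨Nat.log_le_self 2 n, fun h => Nat.pow_log_le_self 2 ?_,
    fun k hk _ => not_le.2 (Nat.lt_pow_of_log_lt one_lt_two hk)⟩
  rintro rfl
  simp at h

lemma Primrec.nat_pow : Primrec₂ ((· ^ ·) : ℕ → ℕ → ℕ) := Primrec₂.unpaired'.1 Nat.Primrec.pow

lemma Primrec.nat_log_two : Primrec (Nat.log 2) := by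
  refine (Primrec.nat_findGreatest Primrec.id ?_).of_eq fun n => (log_two_eq_findGreatest n).symm
  exact Primrec.nat_le.comp (Primrec.nat_pow.comp (Primrec.const 2) Primrec.snd) Primrec.fst

lemma Primrec.nat_testBit : Primrec₂ Nat.testBit := by
  refine Primrec₂.of_eq ?_ fun n i => Nat.testBit_eq_decide_div_mod_eq.symm
  exact (Primrec.eq.comp (Primrec.nat_mod.comp (Primrec.nat_div.comp Primrec.fst
    (Primrec.nat_pow.comp (Primrec.const 2) Primrec.snd)) (Primrec.const 2))
    (Primrec.const 1)).decide.to₂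

lemma primrec_selfDelim : Primrec selfDelim := by
  refine (Primrec.list_append.comp (Primrec.list_map Primrec.id (Primrec.const true).to₂)
    (Primrec.list_cons.comp (Primrec.const false) Primrec.id)).of_eq fun ρ => ?_
  simp [selfDelim, List.map_const']

lemma primrec_enc : Primrec enc :=
  primrec_selfDelim.comp <| Primrec.list_map (Primrec.list_range.comp
    (Primrec.succ.comp Primrec.nat_log_two)) (Primrec.nat_testBit.comp Primrec.fst Primrec.snd)

lemma PrefixOracleMachine.eq_of_computes_of_prefix (M : PrefixOracleMachine) {A : Seq2}
    {p q y z : BinStr} (hp : M.Computes A p y) (hq : M.Computes A q z) (hpq : p <+: q) :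
    p = q ∧ y = z := by
  obtain ⟨s, _, hs, m, rfl⟩ := hp
  obtain ⟨t, _, ht, n, rfl⟩ := hq
  refine M.consistent s t _ p y _ q z hs ht ?_ hpq
  rcases le_total m n with h | h
  · exact Or.inl (restrict_prefix_restrict A h)
  · exact Or.inr (restrict_prefix_restrict A h)

lemma exists_length_eq_KOr (U : UniversalPrefixMachine) (A : Seq2) (y : BinStr) :
    ∃ p : BinStr, p.length = KOr U A y ∧ U.Computes A p y := by
  obtain ⟨p, hp⟩ := U.total A y
  exact Nat.sInf_mem (s := {n | ∃ p : BinStr, p.length = n ∧ U.Computes A p y})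
    ⟨p.length, p, rfl, hp⟩

lemma KOr_le_length (U : UniversalPrefixMachine) {A : Seq2} {p y : BinStr}
    (h : U.Computes A p y) : KOr U A y ≤ p.length :=
  Nat.sInf_le ⟨p, rfl, h⟩

lemma exists_KOr_le_of_computes (U : UniversalPrefixMachine) (M : PrefixOracleMachine) :
    ∃ c, ∀ (A : Seq2) (p y : BinStr), M.Computes A p y → KOr U A y ≤ p.length + c := by
  obtain ⟨c, hc⟩ := U.universal M
  refine ⟨c, fun A p y h => ?_⟩
  obtain ⟨q, hq, hlen⟩ := hc A p y h
  exact (KOr_le_length U hq).trans hlen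

def lengthCodeMachine : PrefixOracleMachine where
  axioms s := (Encodable.decode s : Option BinStr).map fun σ => (σ, enc σ.length, σ)
  axioms_computable := (Primrec.option_map Primrec.decode (Primrec.snd.pair
      ((primrec_enc.comp (Primrec.list_length.comp Primrec.snd)).pair Primrec.snd)).to₂).to_comp
  consistent := by
    intro s t τ₁ p₁ y₁ τ₂ p₂ y₂ h₁ h₂ hτ hp
    obtain ⟨σ₁, -, h₁⟩ := Option.map_eq_some_iff.1 h₁
    obtain ⟨σ₂, -, h₂⟩ := Option.map_eq_some_iff.1 h₂
    simp only [Prod.mk.injEq] at h₁ h₂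
    obtain ⟨rfl, rfl, rfl⟩ := h₁
    obtain ⟨rfl, rfl, rfl⟩ := h₂
    have hlen : σ₁.length = σ₂.length := eq_of_enc_prefix hp
    obtain rfl : σ₁ = σ₂ := hτ.elim (·.eq_of_length hlen) (·.eq_of_length hlen.symm |>.symm)
    exact ⟨rfl, rfl⟩

lemma lengthCodeMachine_computes (A : Seq2) (n : ℕ) :
    lengthCodeMachine.Computes A (enc n) (restrict A n) :=
  ⟨Encodable.encode (restrict A n), restrict A n,
    by simp [lengthCodeMachine, restrict_length], n, rfl⟩

lemma exists_KOr_restrict_le (U : UniversalPrefixMachine) :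
    ∃ c, ∀ (A : Seq2) (n : ℕ), KOr U A (restrict A n) ≤ 2 * Nat.log 2 n + c := by
  obtain ⟨c, hc⟩ := exists_KOr_le_of_computes U lengthCodeMachine
  refine ⟨c + 3, fun A n => ?_⟩
  have := hc A _ _ (lengthCodeMachine_computes A n)
  rw [enc_length] at this
  omega

lemma exists_KcNat_le (U : UniversalPrefixMachine) :
    ∃ c, ∀ n : ℕ, KcNat U n ≤ 2 * Nat.log 2 n + c := by
  obtain ⟨c, hc⟩ := exists_KOr_restrict_le U
  refine ⟨c, fun n => ?_⟩
  simpa only [KcNat, Kc, restrict_zeroSeq] using hc zeroSeq n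

lemma delta02Fun_of_computable {g : ℕ → ℕ} (hg : Computable g) : Delta02Fun g :=
  ⟨fun _ x => g x, (hg.comp Computable.snd).to₂, fun _ => ⟨0, fun _ _ => rfl⟩⟩

lemma delta02StrFun_of_computable {f : BinStr → ℕ} (hf : Computable f) : Delta02StrFun f :=
  ⟨fun _ σ => f σ, (hf.comp Computable.snd).to₂, fun _ => ⟨0, fun _ _ => rfl⟩⟩

lemma strNum_append_singleton (σ : BinStr) (b : Bool) :
    strNum (σ ++ [b]) = 2 * strNum σ + if b then 2 else 1 := by
  simp [strNum, List.foldl_append]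

lemma log_two_strNum_succ (σ : BinStr) : Nat.log 2 (strNum σ + 1) = σ.length := by
  refine (Nat.log_eq_iff (Or.inr ⟨one_lt_two, by omega⟩)).2 ?_
  induction σ using List.reverseRecOn with
  | nil => simp [strNum]
  | append_singleton σ b ih =>
    rw [strNum_append_singleton, List.length_append, List.length_singleton, pow_succ, pow_succ]
    cases b <;> simp only [Bool.false_eq_true, ite_true, ite_false] <;> omega

lemma length_le_of_strNum_le {σ τ : BinStr} (h : strNum σ ≤ strNum τ) : σ.length ≤ τ.length := by
  rw [← log_two_strNum_succ σ, ← log_two_strNum_succ τ]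
  exact Nat.log_mono_right (by omega)

lemma lt_log_two_two_pow_succ (b : ℕ) : b < Nat.log 2 (2 ^ (b + 1)) := by
  rw [Nat.log_pow one_lt_two]
  exact b.lt_succ_self

lemma isOrder_log_two : IsOrder (Nat.log 2) :=
  ⟨fun _ _ h => Nat.log_mono_right h, fun b => ⟨_, lt_log_two_two_pow_succ b⟩⟩

lemma isStrOrder_log_two_length : IsStrOrder fun σ => Nat.log 2 σ.length :=
  ⟨fun _ _ h => Nat.log_mono_right (length_le_of_strNum_le h),
    fun b => ⟨List.replicate (2 ^ (b + 1)) false, by simp⟩⟩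

lemma exists_three_mul_log_two_add_lt (C : ℕ) : ∃ n, 3 * Nat.log 2 n + C < n := by
  refine ⟨2 ^ (4 * (C + 1)), ?_⟩
  -- `2 ^ (4 (C + 1)) = 16 ^ (C + 1) ≥ 1 + 15 (C + 1)` by Bernoulli's inequality
  have bernoulli := one_add_mul_le_pow (a := (15 : ℤ)) (by norm_num) (C + 1)
  rw [Nat.log_pow one_lt_two]
  zify
  rw [pow_mul]
  push_cast at bernoulli
  norm_num at bernoulli ⊢
  linarith

lemma not_KT_log_two_of_MLRandom {U : UniversalPrefixMachine} {A : Seq2} (hA : MLRandom U A) :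
    ¬ KT U (Nat.log 2) A := by
  rintro ⟨c, hc⟩
  obtain ⟨c₀, hc₀⟩ := hA
  obtain ⟨c₁, hc₁⟩ := exists_KcNat_le U
  obtain ⟨n, hn⟩ := exists_three_mul_log_two_add_lt (c₀ + c₁ + c)
  refine lt_irrefl n (calc
    n ≤ Kc U (restrict A n) + c₀ := hc₀ n
    _ ≤ KcNat U n + Nat.log 2 n + c + c₀ := by gcongr; exact hc n
    _ ≤ 3 * Nat.log 2 n + (c₀ + c₁ + c) := by linarith [hc₁ n]
    _ < n := hn)

lemma not_LK_log_two_length_of_MLRandom {U : UniversalPrefixMachine} {A : Seq2}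
    (hA : MLRandom U A) : ¬ LK U (fun σ => Nat.log 2 σ.length) A := by
  rintro ⟨c, hc⟩
  obtain ⟨c₀, hc₀⟩ := hA
  obtain ⟨c₁, hc₁⟩ := exists_KOr_restrict_le U
  obtain ⟨n, hn⟩ := exists_three_mul_log_two_add_lt (c₀ + c₁ + c)
  refine lt_irrefl n (calc
    n ≤ Kc U (restrict A n) + c₀ := hc₀ n
    _ ≤ KOr U A (restrict A n) + Nat.log 2 n + c + c₀ := by
      gcongr; simpa only [restrict_length] using hc (restrict A n)
    _ ≤ 3 * Nat.log 2 n + (c₀ + c₁ + c) := by linarith [hc₁ A n]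
    _ < n := hn)

open MeasureTheory
open scoped ENNReal

def binValue (σ : BinStr) : ℕ := σ.foldl (fun n b => 2 * n + b.toNat) 0

lemma binValue_append_singleton (σ : BinStr) (b : Bool) :
    binValue (σ ++ [b]) = 2 * binValue σ + b.toNat := by
  simp [binValue, List.foldl_append]

lemma binValue_lt_two_pow (σ : BinStr) : binValue σ < 2 ^ σ.length := by
  induction σ using List.reverseRecOn with
  | nil => simp [binValue]
  | append_singleton σ b ih =>
    rw [binValue_append_singleton, List.length_append, List.length_singleton, pow_succ]
    have := b.toNat_le
    omega

lemma eq_of_binValue_eq {σ τ : BinStr} (hlen : σ.length = τ.length)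
    (hv : binValue σ = binValue τ) : σ = τ := by
  induction σ using List.reverseRecOn generalizing τ with
  | nil => exact (List.length_eq_zero_iff.1 hlen.symm).symm
  | append_singleton σ b ih =>
    obtain ⟨τ, c, rfl⟩ : ∃ τ' c, τ = τ' ++ [c] := by
      rcases τ.eq_nil_or_concat with rfl | ⟨τ', c, rfl⟩
      · simp at hlen
      · exact ⟨τ', c, List.concat_eq_append⟩
    rw [binValue_append_singleton, binValue_append_singleton] at hv
    have hb : b = c := by cases b <;> cases c <;> simp at hv ⊢ <;> omega
    subst hb
    rw [ih (by simpa using hlen) (by omega)]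

lemma floor_mul_two_pow_succ (x : ℝ) (n : ℕ) :
    ⌊x * 2 ^ (n + 1)⌋ = 2 * ⌊x * 2 ^ n⌋ + ((realBit x n).toNat : ℤ) := by
  have hhalf : ⌊x * 2 ^ n⌋ = ⌊x * 2 ^ (n + 1)⌋ / (2 : ℕ) := by
    rw [← Int.floor_div_natCast]
    congr 1
    push_cast
    ring
  rw [hhalf, realBit]
  rcases Int.emod_two_eq_zero_or_one ⌊x * 2 ^ (n + 1)⌋ with h | h <;> simp [h] <;> omega

lemma floor_mul_two_pow_eq_binValue {x : ℝ} (hx : x ∈ Set.Ico (0 : ℝ) 1) (n : ℕ) :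
    ⌊x * 2 ^ n⌋ = binValue (restrict (realBit x) n) := by
  induction n with
  | zero => simp [restrict, binValue, Int.floor_eq_zero_iff, hx.1, hx.2]
  | succ n ih =>
    rw [floor_mul_two_pow_succ, ih, restrict_succ, binValue_append_singleton]
    push_cast
    ring

lemma restrict_realBit_eq_iff {x : ℝ} (hx : x ∈ Set.Ico (0 : ℝ) 1) (σ : BinStr) :
    restrict (realBit x) σ.length = σ ↔ ⌊x * 2 ^ σ.length⌋ = binValue σ := by
  rw [floor_mul_two_pow_eq_binValue hx, Nat.cast_inj]
  exact ⟨congrArg binValue, eq_of_binValue_eq (restrict_length _ _)⟩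

lemma measurable_realBit : Measurable realBit :=
  measurable_pi_lambda _ fun _ => (measurable_from_top (f := fun z : ℤ => decide (z % 2 = 1))).comp
    (Int.measurable_floor.comp (measurable_id.mul_const _))

def cyl (σ : BinStr) : Set Seq2 := {A | restrict A σ.length = σ}

lemma measurableSet_cyl (σ : BinStr) : MeasurableSet (cyl σ) := by
  have : cyl σ = (fun A (i : Fin σ.length) => A i) ⁻¹' {σ.get} := by
    ext A
    rw [cyl, Set.mem_ofPred_eq, restrict_eq_ofFn, Set.mem_preimage, Set.mem_singleton_iff,
      ← List.ofFn_inj, List.ofFn_get]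
  rw [this]
  exact measurable_pi_lambda _ (fun i => measurable_pi_apply _) (measurableSet_singleton _)

lemma realBit_preimage_cyl_inter_Ico (σ : BinStr) :
    realBit ⁻¹' cyl σ ∩ Set.Ico 0 1 =
      Set.Ico ((binValue σ : ℝ) / 2 ^ σ.length) ((binValue σ + 1 : ℝ) / 2 ^ σ.length) := by
  have hpos : (0 : ℝ) < 2 ^ σ.length := by positivity
  have hlt : (binValue σ + 1 : ℝ) ≤ 2 ^ σ.length := by exact_mod_cast binValue_lt_two_pow σ
  ext x
  simp only [Set.mem_inter_iff, Set.mem_preimage, cyl, Set.mem_ofPred_eq, Set.mem_Ico,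
    div_le_iff₀ hpos, lt_div_iff₀ hpos]
  constructor
  · rintro ⟨h, hx⟩
    rw [restrict_realBit_eq_iff hx, Int.floor_eq_iff] at h
    exact_mod_cast h
  · rintro ⟨h₁, h₂⟩
    have hx : x ∈ Set.Ico (0 : ℝ) 1 :=
      ⟨nonneg_of_mul_nonneg_left (le_trans (by positivity) h₁) hpos,
        (mul_lt_iff_lt_one_left hpos).1 (h₂.trans_le hlt)⟩
    refine ⟨(restrict_realBit_eq_iff hx σ).2 (Int.floor_eq_iff.2 ?_), hx⟩
    exact ⟨by exact_mod_cast h₁, by exact_mod_cast h₂⟩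

lemma cantorMeasure_eq_map_Ico :
    cantorMeasure = Measure.map realBit (volume.restrict (Set.Ico (0 : ℝ) 1)) := by
  rw [cantorMeasure, Measure.restrict_congr_set Ico_ae_eq_Icc]

lemma cantorMeasure_cyl (σ : BinStr) : cantorMeasure (cyl σ) = 2⁻¹ ^ σ.length := by
  rw [cantorMeasure_eq_map_Ico, Measure.map_apply measurable_realBit (measurableSet_cyl σ),
    Measure.restrict_apply (measurable_realBit (measurableSet_cyl σ)),
    realBit_preimage_cyl_inter_Ico, Real.volume_Ico, ← sub_div, add_sub_cancel_left,
    one_div, ENNReal.ofReal_inv_of_pos (by positivity), ENNReal.ofReal_pow zero_le_two,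
    ENNReal.ofReal_ofNat, ENNReal.inv_pow]

instance : IsProbabilityMeasure cantorMeasure := by
  have : IsProbabilityMeasure (volume.restrict (Set.Ico (0 : ℝ) 1)) := ⟨by simp⟩
  rw [cantorMeasure_eq_map_Ico]
  exact Measure.isProbabilityMeasure_map measurable_realBit.aemeasurable

lemma disjoint_cyl {σ τ : BinStr} (h₁ : ¬ σ <+: τ) (h₂ : ¬ τ <+: σ) :
    Disjoint (cyl σ) (cyl τ) := by
  refine Set.disjoint_left.2
    fun A (hσ : restrict A σ.length = σ) (hτ : restrict A τ.length = τ) => ?_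
  rcases le_total σ.length τ.length with h | h
  · exact h₁ (hσ ▸ hτ ▸ restrict_prefix_restrict A h)
  · exact h₂ (hσ ▸ hτ ▸ restrict_prefix_restrict A h)

lemma tsum_inv_two_pow_length_le_one {ι : Type*} [Countable ι] (p : ι → BinStr)
    (hp : ∀ a b, p a <+: p b → a = b) : ∑' a, (2⁻¹ : ℝ≥0∞) ^ (p a).length ≤ 1 := by
  have hdisj : Pairwise (Function.onFun Disjoint fun a => cyl (p a)) := fun a b hab =>
    disjoint_cyl (fun h => hab (hp a b h)) (fun h => hab (hp b a h).symm)
  calc ∑' a, (2⁻¹ : ℝ≥0∞) ^ (p a).length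
      = cantorMeasure (⋃ a, cyl (p a)) := by
        simp only [measure_iUnion hdisj fun a => measurableSet_cyl (p a), cantorMeasure_cyl]
    _ ≤ 1 := prob_le_one

lemma tsum_inv_two_pow_Kc_le_one (U : UniversalPrefixMachine) :
    ∑' σ, (2⁻¹ : ℝ≥0∞) ^ Kc U σ ≤ 1 := by
  choose p hlen hp using exists_length_eq_KOr U zeroSeq
  simp only [Kc, ← hlen]
  exact tsum_inv_two_pow_length_le_one p fun σ τ h =>
    (U.eq_of_computes_of_prefix (hp σ) (hp τ) h).2

lemma cantorMeasure_biUnion_cyl_compressible_le (U : UniversalPrefixMachine) (c : ℕ) :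
    cantorMeasure (⋃ σ ∈ {σ : BinStr | Kc U σ + c < σ.length}, cyl σ) ≤ 2⁻¹ ^ c := calc
  _ ≤ ∑' σ : {σ : BinStr | Kc U σ + c < σ.length}, cantorMeasure (cyl σ) :=
      measure_biUnion_le _ (Set.to_countable _) _
  _ ≤ ∑' σ : {σ : BinStr | Kc U σ + c < σ.length}, 2⁻¹ ^ c * 2⁻¹ ^ Kc U σ := by
      refine ENNReal.tsum_le_tsum fun σ => ?_
      rw [cantorMeasure_cyl, ← pow_add, add_comm]
      exact pow_le_pow_right_of_le_one' (by norm_num) σ.2.le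
  _ ≤ ∑' σ, 2⁻¹ ^ c * 2⁻¹ ^ Kc U σ :=
      ENNReal.tsum_comp_le_tsum_of_injective Subtype.val_injective _
  _ ≤ 2⁻¹ ^ c := by
      rw [ENNReal.tsum_mul_left]
      exact mul_le_of_le_one_right' (tsum_inv_two_pow_Kc_le_one U)

lemma cantorMeasure_setOf_not_MLRandom (U : UniversalPrefixMachine) :
    cantorMeasure {A | ¬ MLRandom U A} = 0 := by
  have hcover : ∀ c, {A | ¬ MLRandom U A} ⊆ ⋃ σ ∈ {σ : BinStr | Kc U σ + c < σ.length}, cyl σ := by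
    intro c A hA
    obtain ⟨n, hn⟩ := not_forall.1 (not_exists.1 hA c)
    exact Set.mem_biUnion (x := restrict A n) (by simp [restrict_length]; omega)
      (by simp [cyl, restrict_length])
  refine le_zero_iff.1 (ge_of_tendsto' (ENNReal.tendsto_pow_atTop_nhds_zero_of_lt_one ?_)
    fun c => (measure_mono (hcover c)).trans (cantorMeasure_biUnion_cyl_compressible_le U c))
  norm_num

lemma not_KTDelta_of_MLRandom {U : UniversalPrefixMachine} {A : Seq2} (hA : MLRandom U A) :
    ¬ KTDelta U A := fun h =>
  not_KT_log_two_of_MLRandom hA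
    (h _ (delta02Fun_of_computable Primrec.nat_log_two.to_comp) isOrder_log_two)

lemma not_LKDelta_of_MLRandom {U : UniversalPrefixMachine} {A : Seq2} (hA : MLRandom U A) :
    ¬ LKDelta U A := fun h =>
  not_LK_log_two_length_of_MLRandom hA
    (h _ (delta02StrFun_of_computable (Primrec.nat_log_two.comp Primrec.list_length).to_comp)
      isStrOrder_log_two_length)

/-- no ML-random real is K-trivial or low for K even up to the order log n,
so none is in KT(Δ⁰₂) or LK(Δ⁰₂); consequently both sets have uniform measure zero. -/
theorem stmt18 (U : UniversalPrefixMachine) :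
    (∀ A : Seq2, MLRandom U A →
      ¬ KT U (fun n => Nat.log 2 n) A ∧
      ¬ LK U (fun σ => Nat.log 2 σ.length) A ∧
      ¬ KTDelta U A ∧ ¬ LKDelta U A) ∧
    cantorMeasure {A : Seq2 | KTDelta U A} = 0 ∧
    cantorMeasure {A : Seq2 | LKDelta U A} = 0 := by
  refine ⟨fun A hA => ⟨not_KT_log_two_of_MLRandom hA, not_LK_log_two_length_of_MLRandom hA,
    not_KTDelta_of_MLRandom hA, not_LKDelta_of_MLRandom hA⟩, ?_, ?_⟩
  · exact measure_mono_null (fun A hA hR => not_KTDelta_of_MLRandom hR hA)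
      (cantorMeasure_setOf_not_MLRandom U)
  · exact measure_mono_null (fun A hA hR => not_LKDelta_of_MLRandom hR hA)
      (cantorMeasure_setOf_not_MLRandom U)
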